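/- arXiv:1411.5505 — 2 statements merged into one kernel-verified Lean document; each statement's English description precedes it below -/
import Mathlib

section
/- Let q > 2, λ > 0, and let f : [0,∞) → ℝ be a twice continuously differentiable solution of the ODE f''(ξ) + λ|f'(ξ)|^q − (1/2)ξ f'(ξ) + ((q−2)/(2(q−1))) f(ξ) = 0 on [0,∞) with f(0) = −1 and f'(0) = 0. Define g : ℝ → ℝ by g(t) = e^{−t/(q−1)} f'(e^t). Then lim_{t→∞} g(t) = C₀, where C₀ = (1/(λq))^{1/(q−1)}. -/
open Set Filter Topology Real

/-- `f` is a twice continuously differentiable solution, on the set `s`, of the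
self-similar profile ODE `f'' + λ|f'|^q - (1/2)ξ f' + ((q-2)/(2(q-1))) f = 0`
associated with the generalized deterministic KPZ equation. -/
def SolvesKPZProfile (q lam : ℝ) (s : Set ℝ) (f : ℝ → ℝ) : Prop :=
  ContDiffOn ℝ 2 f s ∧
  ∀ ξ ∈ s,
    derivWithin (derivWithin f s) s ξ + lam * |derivWithin f s ξ| ^ q
      - (1 / 2) * ξ * derivWithin f s ξ + ((q - 2) / (2 * (q - 1))) * f ξ = 0

/-- The function `g(t) = e^{-t/(q-1)} f'(e^t)`, i.e. the profile derivative in the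
variables `f'(ξ) = ξ^{1/(q-1)} g(t)`, `ξ = e^t`. -/
noncomputable def kpzG (q : ℝ) (f : ℝ → ℝ) : ℝ → ℝ :=
  fun t => Real.exp (-t / (q - 1)) * derivWithin f (Set.Ici 0) (Real.exp t)


/-!
Write `v = f'`. At a first zero of `f''` the differentiated equation would give
`f''' = v / (2 (q - 1)) > 0`, so `f'' > 0` on `[0, ∞)` and `v > 0` on `(0, ∞)`. In the variables
`X = λ q v ^ (q - 1)` and `P = f'' / v` the equation becomes `X' = (q - 1) X P` together with the
Riccati equation `P' = (ξ / 2 - X) P + 1 / (2 (q - 1)) - P ^ 2`, and since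
`g (log ξ) ^ (q - 1) = X ξ / (λ q ξ)` the claim is `X ξ / ξ → 1`, i.e. `L = log X - log ξ → 0`.

On a stretch where `L ≤ -ε`, the Riccati equation drives `P` within unit time above the barrier
`e ^ ε / ((q - 1) ξ)` and keeps it there, so `L' ≥ (e ^ ε - 1) / ξ`: such a stretch cannot last
forever, and once `L` has reached `-ε` it never drops below `-2 ε` again. Once `X ≥ e ^ (-1/4) ξ`,
which exceeds `ξ / 2` by a fixed fraction, the damping term `(ξ / 2 - X) P` forces `P → 0`, and the
mirror-image barrier argument gives `L ≤ 2 ε` eventually.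
-/

theorem monotoneOn_Icc_of_hasDerivAt_nonneg {φ φ' : ℝ → ℝ} {a b : ℝ}
    (hd : ∀ x ∈ Icc a b, HasDerivAt φ (φ' x) x) (hφ' : ∀ x ∈ Ioo a b, 0 ≤ φ' x) :
    MonotoneOn φ (Icc a b) :=
  monotoneOn_of_hasDerivWithinAt_nonneg (convex_Icc a b)
    (fun x hx => (hd x hx).continuousAt.continuousWithinAt)
    (fun x hx => (hd x (interior_subset hx)).hasDerivWithinAt)
    (fun x hx => hφ' x (by rwa [interior_Icc] at hx))

theorem HasDerivAt.nonpos_of_forall_Ico_le {φ : ℝ → ℝ} {d a m : ℝ} (hd : HasDerivAt φ d m)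
    (ham : a < m) (hmin : ∀ x ∈ Ico a m, φ m ≤ φ x) : d ≤ 0 := by
  have hslope : Tendsto (slope φ m) (𝓝[<] m) (𝓝 d) :=
    (hasDerivAt_iff_tendsto_slope.mp hd).mono_left (nhdsWithin_mono m fun x hx => ne_of_lt hx)
  refine le_of_tendsto hslope ?_
  filter_upwards [Ico_mem_nhdsLT ham] with x hx
  rw [slope_def_field]
  exact div_nonpos_of_nonneg_of_nonpos (sub_nonneg.2 (hmin x hx)) (by linarith [hx.2])

theorem exists_mem_Ioc_eq_forall_lt {Y : ℝ → ℝ} {a b c : ℝ} (hab : a ≤ b)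
    (hY : ContinuousOn Y (Icc a b)) (ha : c < Y a) (hb : Y b ≤ c) :
    ∃ m ∈ Ioc a b, Y m = c ∧ ∀ x ∈ Ico a m, c < Y x := by
  set S := Icc a b ∩ Y ⁻¹' Iic c
  have hbdd : BddBelow S := ⟨a, fun x hx => hx.1.1⟩
  have hmS : sInf S ∈ S :=
    (hY.preimage_isClosed_of_isClosed isClosed_Icc isClosed_Iic).csInf_mem
      ⟨b, ⟨hab, le_rfl⟩, hb⟩ hbdd
  have hlt : ∀ x ∈ Ico a (sInf S), c < Y x := fun x hx => not_le.1 fun hx' =>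
    hx.2.not_ge (csInf_le hbdd ⟨⟨hx.1, hx.2.le.trans hmS.1.2⟩, hx'⟩)
  have ham : a < sInf S := lt_of_le_of_ne hmS.1.1 fun h => (h ▸ hmS.2).not_gt ha
  obtain ⟨x, hx, hYx⟩ := intermediate_value_Icc' ham.le (hY.mono (Icc_subset_Icc le_rfl hmS.1.2))
    ⟨hmS.2, ha.le⟩
  obtain rfl : x = sInf S := (eq_or_lt_of_le hx.2).elim id fun h => absurd hYx (hlt x ⟨hx.1, h⟩).ne'
  exact ⟨_, ⟨ham, hmS.1.2⟩, hYx, hlt⟩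

theorem exists_mem_Icc_eq_forall_le {Y : ℝ → ℝ} {a b c : ℝ} (hab : a ≤ b)
    (hY : ContinuousOn Y (Icc a b)) (ha : c ≤ Y a) (hb : Y b ≤ c) :
    ∃ a' ∈ Icc a b, Y a' = c ∧ ∀ x ∈ Icc a' b, Y x ≤ c := by
  set S := Icc a b ∩ Y ⁻¹' Ici c
  have hbdd : BddAbove S := ⟨b, fun x hx => hx.1.2⟩
  have hmS : sSup S ∈ S :=
    (hY.preimage_isClosed_of_isClosed isClosed_Icc isClosed_Ici).csSup_mem
      ⟨a, ⟨le_rfl, hab⟩, ha⟩ hbdd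
  have hle : ∀ x ∈ Icc (sSup S) b, c ≤ Y x → x = sSup S := fun x hx hYx =>
    le_antisymm (le_csSup hbdd ⟨⟨hmS.1.1.trans hx.1, hx.2⟩, hYx⟩) hx.1
  obtain ⟨x, hx, hYx⟩ := intermediate_value_Icc' hmS.1.2 (hY.mono (Icc_subset_Icc hmS.1.1 le_rfl))
    ⟨hb, hmS.2⟩
  have hc : Y (sSup S) = c := hle x hx hYx.ge ▸ hYx
  exact ⟨sSup S, hmS.1, hc, fun x hx => not_lt.1 fun h => h.ne' (hle x hx h.le ▸ hc)⟩

theorem nonpos_of_hasDerivAt_le_neg {φ φ' : ℝ → ℝ} {a b κ t : ℝ} (hκ : 0 < κ)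
    (hd : ∀ x ∈ Icc a b, HasDerivAt φ (φ' x) x) (hφ' : ∀ x ∈ Icc a b, 0 ≤ φ x → φ' x ≤ -κ)
    (ht : t ∈ Icc a b) (hat : a + φ a / κ ≤ t) : φ t ≤ 0 := by
  have hsub : Icc a t ⊆ Icc a b := Icc_subset_Icc le_rfl ht.2
  -- while positive, `φ` decreases at rate `κ`, so it vanishes somewhere in `[a, a + φ a / κ]`;
  -- from then on it cannot become positive again
  obtain ⟨u, hu, hφu⟩ : ∃ u ∈ Icc a t, φ u ≤ 0 := by
    by_contra! hpos
    have hmono := monotoneOn_Icc_of_hasDerivAt_nonneg (φ := fun x => -(φ x + κ * x))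
      (fun x hx => ((hd x (hsub hx)).add ((hasDerivAt_id x).const_mul κ)).neg)
      (fun x hx => by
        have := hφ' x (hsub (Ioo_subset_Icc_self hx)) (hpos x (Ioo_subset_Icc_self hx)).le
        simp only [mul_one]
        linarith)
    have hdecay := hmono ⟨le_rfl, ht.1⟩ ⟨ht.1, le_rfl⟩ ht.1
    have hφa : φ a ≤ κ * (t - a) := by
      rw [← div_le_iff₀' hκ]
      linarith
    linarith [hpos t ⟨ht.1, le_rfl⟩]
  exact image_le_of_deriv_right_lt_deriv_boundary (B := fun _ => 0) (B' := fun _ => 0)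
    (fun x hx => (hd x ⟨hu.1.trans hx.1, hx.2.trans ht.2⟩).continuousAt.continuousWithinAt)
    (fun x hx => (hd x ⟨hu.1.trans hx.1, hx.2.le.trans ht.2⟩).hasDerivWithinAt) hφu
    (fun x => hasDerivAt_const x 0)
    (fun x hx h0 =>
      (hφ' x ⟨hu.1.trans hx.1, hx.2.le.trans ht.2⟩ h0.ge).trans_lt (neg_neg_of_pos hκ))
    ⟨hu.2, le_rfl⟩

theorem exists_le_of_drift {L L' : ℝ → ℝ} {A c ε : ℝ} (hA : 0 < A) (hε : 0 < ε)
    (hd : ∀ t ≥ A, HasDerivAt L (L' t) t)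
    (hdrift : ∀ b, (∀ t ∈ Icc A b, L t ≤ c) → ∀ t ∈ Icc (A + 1) b, ε / t ≤ L' t) :
    ∃ t ≥ A, c ≤ L t := by
  -- otherwise the drift pushes `L` up like `ε log t`
  by_contra! hbad
  have hgrow : ∀ t ≥ A + 1, L (A + 1) + ε * (log t - log (A + 1)) ≤ L t := by
    intro t ht
    have hmono := monotoneOn_Icc_of_hasDerivAt_nonneg (φ := fun x => L x - ε * log x)
      (a := A + 1) (b := t)
      (fun x hx => (hd x (by linarith [hx.1])).sub
        ((hasDerivAt_log (by linarith [hx.1])).const_mul ε))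
      (fun x hx => by
        have := hdrift x (fun y hy => (hbad y hy.1).le) x ⟨hx.1.le, le_rfl⟩
        rw [div_eq_mul_inv] at this
        linarith)
    have := hmono ⟨le_rfl, ht⟩ ⟨ht, le_rfl⟩ ht
    simp only at this
    linarith
  have hlim : Tendsto (fun t => L (A + 1) + ε * (log t - log (A + 1))) atTop atTop :=
    tendsto_atTop_add_const_left _ _
      (((tendsto_log_atTop.atTop_add (tendsto_const_nhds (x := -log (A + 1)))).congr
        fun t => (sub_eq_add_neg _ _).symm).const_mul_atTop hε)
  obtain ⟨t, htc, htA⟩ := ((hlim.eventually_ge_atTop c).and (eventually_ge_atTop (A + 1))).exists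
  exact (hbad t (by linarith)).not_ge (htc.trans (hgrow t htA))

theorem eventually_ge_of_drift {L L' : ℝ → ℝ} {c δ ε : ℝ} (hδ : 0 ≤ δ) (hε : 0 < ε)
    (hd : ∀ᶠ t in atTop, HasDerivAt L (L' t) t) (hslow : ∀ᶠ t in atTop, -δ ≤ L' t)
    (hdrift : ∀ᶠ a in atTop, ∀ b, (∀ t ∈ Icc a b, L t ≤ c) → ∀ t ∈ Icc (a + 1) b, ε / t ≤ L' t) :
    ∀ᶠ t in atTop, c - δ ≤ L t := by
  obtain ⟨A, hA⟩ := eventually_atTop.1 (hd.and (hslow.and (hdrift.and (eventually_gt_atTop 0))))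
  obtain ⟨G, hGA, hcG⟩ := exists_le_of_drift (hA A le_rfl).2.2.2 hε (fun t ht => (hA t ht).1)
    (hA A le_rfl).2.2.1
  filter_upwards [eventually_ge_atTop G] with ξ hξ
  by_contra! hlow
  -- the last time `a` before `ξ` at which `L = c` starts a stretch below `c`
  obtain ⟨a, ha, hLa, hbad⟩ := exists_mem_Icc_eq_forall_le hξ
    (fun x hx => (hA x (hGA.trans hx.1)).1.continuousAt.continuousWithinAt) hcG (by linarith)
  have haA : A ≤ a := hGA.trans ha.1
  set y := min ξ (a + 1)
  have hy : y ∈ Icc a ξ := ⟨le_min ha.2 (by linarith), min_le_left _ _⟩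
  have hslow_mono := monotoneOn_Icc_of_hasDerivAt_nonneg (φ := fun x => L x + δ * x)
    (a := a) (b := y)
    (fun x hx => (hA x (haA.trans hx.1)).1.add ((hasDerivAt_id x).const_mul δ))
    (fun x hx => by
      have := (hA x (haA.trans hx.1.le)).2.1
      simp only [mul_one]
      linarith)
  have hLy : c - δ ≤ L y := by
    have := hslow_mono ⟨le_rfl, hy.1⟩ ⟨hy.1, le_rfl⟩ hy.1
    simp only at this
    nlinarith [min_le_right ξ (a + 1)]
  have hdrift_mono := monotoneOn_Icc_of_hasDerivAt_nonneg (φ := L) (a := y) (b := ξ)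
    (fun x hx => (hA x (haA.trans (hy.1.trans hx.1))).1)
    (fun x hx => by
      have hx1 : a + 1 ≤ x := ((min_lt_iff.1 hx.1).resolve_left (not_lt.2 hx.2.le)).le
      exact le_trans (div_nonneg hε.le (by linarith [(hA a haA).2.2.2]))
        ((hA a haA).2.2.1 ξ hbad x ⟨hx1, hx.2.le⟩))
  linarith [hdrift_mono ⟨le_rfl, hy.2⟩ ⟨hy.2, le_rfl⟩ hy.2]

theorem eventually_le_of_drift {L L' : ℝ → ℝ} {c δ ε : ℝ} (hδ : 0 ≤ δ) (hε : 0 < ε)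
    (hd : ∀ᶠ t in atTop, HasDerivAt L (L' t) t) (hslow : ∀ᶠ t in atTop, L' t ≤ δ)
    (hdrift : ∀ᶠ a in atTop, ∀ b, (∀ t ∈ Icc a b, c ≤ L t) →
      ∀ t ∈ Icc (a + 1) b, L' t ≤ -(ε / t)) :
    ∀ᶠ t in atTop, L t ≤ c + δ := by
  have := eventually_ge_of_drift (L := fun t => -L t) (L' := fun t => -L' t) (c := -c) hδ hε
    (hd.mono fun t h => h.neg) (hslow.mono fun t h => neg_le_neg h)
    (hdrift.mono fun a h b hb t ht =>
      le_neg_of_le_neg (h b (fun x hx => neg_le_neg_iff.1 (hb x hx)) t ht))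
  filter_upwards [this] with t ht
  linarith

theorem log_sub_log_le_iff {x t c : ℝ} (hx : 0 < x) (ht : 0 < t) :
    log x - log t ≤ c ↔ x ≤ exp c * t := by
  rw [sub_le_iff_le_add, log_le_iff_le_exp hx, exp_add, exp_log ht]

theorem le_log_sub_log_iff {x t c : ℝ} (hx : 0 < x) (ht : 0 < t) :
    c ≤ log x - log t ↔ exp c * t ≤ x := by
  rw [le_sub_iff_add_le, le_log_iff_exp_le hx, exp_add, exp_log ht]

structure KPZReducedSystem (p : ℝ) (X P : ℝ → ℝ) : Prop where
  pos : 0 < p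
  X_pos : ∀ t > 0, 0 < X t
  P_pos : ∀ t > 0, 0 < P t
  hasDerivAt_X : ∀ t > 0, HasDerivAt X (p * X t * P t) t
  hasDerivAt_P : ∀ t > 0, HasDerivAt P ((t / 2 - X t) * P t + 1 / (2 * p) - P t ^ 2) t

namespace KPZReducedSystem

variable {p : ℝ} {X P : ℝ → ℝ}

theorem hasDerivAt_log_sub_log (h : KPZReducedSystem p X P) {t : ℝ} (ht : 0 < t) :
    HasDerivAt (fun x => log (X x) - log x) (p * P t - t⁻¹) t := by
  refine (((h.hasDerivAt_X t ht).log (h.X_pos t ht).ne').sub (hasDerivAt_log ht.ne')).congr_deriv ?_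
  field_simp [(h.X_pos t ht).ne']

theorem le_deriv_P_add_sq (h : KPZReducedSystem p X P) {ε x : ℝ} (hε : ε ≤ 1 / 2) (hx : 0 < x)
    (hX : X x ≤ exp (-ε) * x) (hxP : x * P x ≤ exp ε / p) :
    (exp ε - 1) / (2 * p) ≤ (x / 2 - X x) * P x + 1 / (2 * p) := by
  have hm : (1 / 2 - exp (-ε)) * (exp ε / p) + 1 / (2 * p) = (exp ε - 1) / (2 * p) := by
    rw [exp_neg]
    field_simp
    ring
  nlinarith [mul_nonneg (sub_nonneg.2 hX) (h.P_pos x hx).le, mul_le_mul_of_nonpos_left hxP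
    (by linarith [add_one_le_exp (-ε)] : 1 / 2 - exp (-ε) ≤ 0)]

theorem eventually_drift_of_log_sub_log_le (h : KPZReducedSystem p X P) {ε : ℝ} (hε : 0 < ε)
    (hε' : ε ≤ 1 / 2) :
    ∀ᶠ a in atTop, ∀ b, (∀ t ∈ Icc a b, log (X t) - log t ≤ -ε) →
      ∀ t ∈ Icc (a + 1) b, (exp ε - 1) / t ≤ p * P t - t⁻¹ := by
  have hp := h.pos
  set s := exp ε / p
  set κ := (exp ε - 1) / (2 * p)
  have hκ : 0 < κ := div_pos (by linarith [add_one_lt_exp hε.ne']) (by positivity)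
  obtain ⟨A, hA⟩ := eventually_atTop.1 ((eventually_gt_atTop 0).and
    ((tendsto_const_nhds.div_atTop tendsto_id).eventually
      (ge_mem_nhds (lt_min (half_pos hκ) one_pos))))
  filter_upwards [eventually_ge_atTop A] with a ha b hbad t ht
  have hpos : ∀ x ∈ Icc a b, 0 < x := fun x hx => (hA x (ha.trans hx.1)).1
  -- below the barrier `P = s / x`, the Riccati equation pushes `P` up at rate at least `κ / 2`
  have hrate : ∀ x ∈ Icc a b, 0 ≤ s * x⁻¹ - P x →
      s * -(x ^ 2)⁻¹ - ((x / 2 - X x) * P x + 1 / (2 * p) - P x ^ 2) ≤ -(κ / 2) := by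
    intro x hx hPx
    have hx0 := hpos x hx
    have hsx : s * x⁻¹ ≤ min (κ / 2) 1 := (hA x (ha.trans hx.1)).2
    have hxP : x * P x ≤ s := by
      have := mul_le_mul_of_nonneg_left (sub_nonneg.1 hPx) hx0.le
      rwa [mul_left_comm, mul_inv_cancel₀ hx0.ne', mul_one] at this
    have hdrive := h.le_deriv_P_add_sq hε' hx0
      ((log_sub_log_le_iff (h.X_pos x hx0) hx0).1 (hbad x hx)) hxP
    have hP2 : P x ^ 2 ≤ κ / 2 := by
      nlinarith [min_le_left (κ / 2) 1, min_le_right (κ / 2) 1, sub_nonneg.1 hPx, h.P_pos x hx0]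
    have : 0 ≤ s * (x ^ 2)⁻¹ := by positivity
    linarith
  have hbarrier := nonpos_of_hasDerivAt_le_neg (φ := fun x => s * x⁻¹ - P x) (half_pos hκ)
    (fun x hx => ((hasDerivAt_inv (hpos x hx).ne').const_mul s).sub
      (h.hasDerivAt_P x (hpos x hx))) hrate ⟨by linarith [ht.1], ht.2⟩ (by
      have hsa : s * a⁻¹ ≤ κ / 2 := (hA a ha).2.trans (min_le_left _ _)
      have := h.P_pos a (hA a ha).1
      rw [add_comm, ← le_sub_iff_add_le, div_le_iff₀ (half_pos hκ)]
      nlinarith [ht.1])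
  have : s * t⁻¹ ≤ P t := by linarith [hbarrier]
  calc (exp ε - 1) / t = p * (s * t⁻¹) - t⁻¹ := by simp only [s]; field_simp
    _ ≤ p * P t - t⁻¹ := by gcongr

theorem eventually_neg_two_mul_le_log_sub_log (h : KPZReducedSystem p X P) {ε : ℝ}
    (hε : 0 < ε) (hε' : ε ≤ 1 / 2) :
    ∀ᶠ t in atTop, -(2 * ε) ≤ log (X t) - log t := by
  have hslow : ∀ᶠ t in atTop, -ε ≤ p * P t - t⁻¹ := by
    filter_upwards [eventually_gt_atTop 0, eventually_ge_atTop ε⁻¹] with t ht htε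
    have := mul_pos h.pos (h.P_pos t ht)
    linarith [inv_le_of_inv_le₀ hε htε]
  have := eventually_ge_of_drift (c := -ε) hε.le (by linarith [add_one_lt_exp hε.ne'])
    ((eventually_gt_atTop 0).mono fun t ht => h.hasDerivAt_log_sub_log ht) hslow
    (h.eventually_drift_of_log_sub_log_le hε hε')
  filter_upwards [this] with t ht
  linarith

theorem tendsto_P_zero (h : KPZReducedSystem p X P) {m : ℝ} (hm : 1 / 2 < m)
    (hX : ∀ᶠ t in atTop, m * t ≤ X t) : Tendsto P atTop (𝓝 0) := by
  refine tendsto_order.2 ⟨fun a ha => (eventually_gt_atTop 0).mono fun t ht =>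
    ha.trans (h.P_pos t ht), fun η hη => ?_⟩
  obtain ⟨A, hA⟩ := eventually_atTop.1 ((eventually_gt_atTop 0).and (hX.and
    (eventually_ge_atTop ((1 + 1 / (2 * p)) / ((m - 1 / 2) * (η / 2))))))
  -- above the level `η / 2`, the damping `(t / 2 - X) P` makes `P` decrease at rate at least `1`
  have hrate : ∀ x ≥ A, 0 ≤ P x - η / 2 →
      (x / 2 - X x) * P x + 1 / (2 * p) - P x ^ 2 ≤ -1 := by
    intro x hx hPx
    obtain ⟨hx0, hX, hxA⟩ := hA x hx
    have hlarge : 1 + 1 / (2 * p) ≤ (m - 1 / 2) * (η / 2) * x := by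
      rwa [div_le_iff₀' (by nlinarith)] at hxA
    nlinarith [mul_nonneg (sub_nonneg.2 hX) (h.P_pos x hx0).le,
      mul_le_mul_of_nonneg_left (sub_nonneg.1 hPx) (by nlinarith : 0 ≤ (m - 1 / 2) * x)]
  filter_upwards [eventually_ge_atTop A, eventually_ge_atTop (A + P A)] with t hAt ht
  have := nonpos_of_hasDerivAt_le_neg (φ := fun x => P x - η / 2) one_pos
    (fun x hx => (h.hasDerivAt_P x (hA x hx.1).1).sub_const _) (fun x hx => hrate x hx.1)
    ⟨hAt, le_rfl⟩ (by rw [div_one]; linarith)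
  linarith

theorem deriv_P_add_sq_le (h : KPZReducedSystem p X P) {ε x : ℝ} (hε : 0 ≤ ε) (hx : 0 < x)
    (hX : exp ε * x ≤ X x) (hxP : exp (-ε) / p ≤ x * P x) :
    (x / 2 - X x) * P x + 1 / (2 * p) ≤ -((1 - exp (-ε)) / (2 * p)) := by
  have hm : (1 / 2 - exp ε) * (exp (-ε) / p) + 1 / (2 * p) = -((1 - exp (-ε)) / (2 * p)) := by
    rw [exp_neg]
    field_simp
    ring
  nlinarith [mul_nonneg (sub_nonneg.2 hX) (h.P_pos x hx).le, mul_le_mul_of_nonpos_left hxP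
    (by linarith [add_one_le_exp ε] : 1 / 2 - exp ε ≤ 0)]

theorem eventually_drift_of_le_log_sub_log (h : KPZReducedSystem p X P)
    (hP : Tendsto P atTop (𝓝 0)) {ε : ℝ} (hε : 0 < ε) :
    ∀ᶠ a in atTop, ∀ b, (∀ t ∈ Icc a b, ε ≤ log (X t) - log t) →
      ∀ t ∈ Icc (a + 1) b, p * P t - t⁻¹ ≤ -((1 - exp (-ε)) / t) := by
  have hp := h.pos
  set s := exp (-ε) / p
  set κ := (1 - exp (-ε)) / (2 * p)
  have hκ : 0 < κ := div_pos (by linarith [exp_lt_one_iff.2 (neg_lt_zero.2 hε)]) (by positivity)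
  obtain ⟨A, hA⟩ := eventually_atTop.1 ((eventually_gt_atTop 0).and
    (((tendsto_const_nhds.div_atTop (tendsto_pow_atTop two_ne_zero)).eventually
      (ge_mem_nhds (half_pos hκ))).and (hP.eventually (ge_mem_nhds (half_pos hκ)))))
  filter_upwards [eventually_ge_atTop A] with a ha b hbad t ht
  have hpos : ∀ x ∈ Icc a b, 0 < x := fun x hx => (hA x (ha.trans hx.1)).1
  -- above the barrier `P = s / x`, the Riccati equation pushes `P` down at rate at least `κ / 2`
  have hrate : ∀ x ∈ Icc a b, 0 ≤ P x - s * x⁻¹ →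
      (x / 2 - X x) * P x + 1 / (2 * p) - P x ^ 2 - s * -(x ^ 2)⁻¹ ≤ -(κ / 2) := by
    intro x hx hPx
    have hx0 := hpos x hx
    have hsx : s / x ^ 2 ≤ κ / 2 := (hA x (ha.trans hx.1)).2.1
    have hxP : s ≤ x * P x := by
      have := mul_le_mul_of_nonneg_left (sub_nonneg.1 hPx) hx0.le
      rwa [mul_left_comm, mul_inv_cancel₀ hx0.ne', mul_one] at this
    have hdamp := h.deriv_P_add_sq_le hε.le hx0
      ((le_log_sub_log_iff (h.X_pos x hx0) hx0).1 (hbad x hx)) hxP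
    rw [div_eq_mul_inv] at hsx
    nlinarith [sq_nonneg (P x)]
  have hbarrier := nonpos_of_hasDerivAt_le_neg (φ := fun x => P x - s * x⁻¹) (half_pos hκ)
    (fun x hx => (h.hasDerivAt_P x (hpos x hx)).sub
      ((hasDerivAt_inv (hpos x hx).ne').const_mul s)) hrate ⟨by linarith [ht.1], ht.2⟩ (by
      have hPa : P a ≤ κ / 2 := (hA a ha).2.2
      have : 0 ≤ s * a⁻¹ := by have := (hA a ha).1; positivity
      rw [add_comm, ← le_sub_iff_add_le, div_le_iff₀ (half_pos hκ)]
      nlinarith [ht.1])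
  have : P t ≤ s * t⁻¹ := by linarith [hbarrier]
  calc p * P t - t⁻¹ ≤ p * (s * t⁻¹) - t⁻¹ := by gcongr
    _ = -((1 - exp (-ε)) / t) := by simp only [s]; field_simp; ring

theorem eventually_log_sub_log_le_two_mul (h : KPZReducedSystem p X P)
    (hP : Tendsto P atTop (𝓝 0)) {ε : ℝ} (hε : 0 < ε) :
    ∀ᶠ t in atTop, log (X t) - log t ≤ 2 * ε := by
  have hslow : ∀ᶠ t in atTop, p * P t - t⁻¹ ≤ ε := by
    filter_upwards [eventually_gt_atTop 0, hP.eventually (ge_mem_nhds (div_pos hε h.pos))]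
      with t ht hPt
    have := inv_pos.2 ht
    have := (le_div_iff₀' h.pos).1 hPt
    linarith
  have := eventually_le_of_drift (c := ε) hε.le (by linarith [exp_lt_one_iff.2 (neg_lt_zero.2 hε)])
    ((eventually_gt_atTop 0).mono fun t ht => h.hasDerivAt_log_sub_log ht) hslow
    (h.eventually_drift_of_le_log_sub_log hP hε)
  filter_upwards [this] with t ht
  linarith

theorem tendsto_log_sub_log (h : KPZReducedSystem p X P) :
    Tendsto (fun t => log (X t) - log t) atTop (𝓝 0) := by
  have hP : Tendsto P atTop (𝓝 0) := by
    refine h.tendsto_P_zero (m := exp (-(2 * (1 / 8))))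
      (by linarith [add_one_le_exp (-(2 * (1 / 8)))]) ?_
    filter_upwards [h.eventually_neg_two_mul_le_log_sub_log (ε := 1 / 8) (by norm_num)
      (by norm_num), eventually_gt_atTop 0] with t ht ht0
    exact (le_log_sub_log_iff (h.X_pos t ht0) ht0).1 ht
  refine tendsto_order.2 ⟨fun a ha => ?_, fun b hb => ?_⟩
  · filter_upwards [h.eventually_neg_two_mul_le_log_sub_log (ε := min (1 / 2) (-a / 4))
      (lt_min (by norm_num) (by linarith)) (min_le_left _ _)] with t ht
    linarith [min_le_right (1 / 2) (-a / 4)]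
  · filter_upwards [h.eventually_log_sub_log_le_two_mul hP (ε := b / 4) (by linarith)] with t ht
    linarith

theorem tendsto_X_div (h : KPZReducedSystem p X P) : Tendsto (fun t => X t / t) atTop (𝓝 1) := by
  have := (continuous_exp.tendsto 0).comp h.tendsto_log_sub_log
  rw [exp_zero] at this
  refine this.congr' ((eventually_gt_atTop 0).mono fun t ht => ?_)
  simp only [Function.comp, exp_sub, exp_log (h.X_pos t ht), exp_log ht]

end KPZReducedSystem

theorem pos_of_hasDerivAt_pos {v w : ℝ → ℝ} {ξ : ℝ} (hξ : 0 < ξ) (hv : ContinuousOn v (Icc 0 ξ))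
    (hv0 : v 0 = 0) (hvw : ∀ x ∈ Ioo 0 ξ, HasDerivAt v (w x) x) (hw : ∀ x ∈ Ioo 0 ξ, 0 < w x) :
    0 < v ξ := by
  have := strictMonoOn_of_hasDerivWithinAt_pos (convex_Icc 0 ξ) hv
    (fun x hx => (hvw x (by rwa [interior_Icc] at hx)).hasDerivWithinAt)
    (fun x hx => hw x (by rwa [interior_Icc] at hx))
    (left_mem_Icc.2 hξ.le) (right_mem_Icc.2 hξ.le) hξ
  rwa [hv0] at this

theorem forall_pos_of_crossing_upward {v w : ℝ → ℝ} (hv : ContinuousOn v (Ici 0))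
    (hw : ContinuousOn w (Ici 0)) (hv0 : v 0 = 0) (hw0 : 0 < w 0)
    (hvw : ∀ ξ > 0, HasDerivAt v (w ξ) ξ)
    (hcross : ∀ ξ > 0, 0 < v ξ → w ξ = 0 → ∃ D > 0, HasDerivAt w D ξ) :
    ∀ ξ ≥ 0, 0 < w ξ := by
  by_contra! ⟨ξ, hξ, hwξ⟩
  obtain ⟨m, ⟨hm0, -⟩, hwm, hpos⟩ :=
    exists_mem_Ioc_eq_forall_lt hξ (hw.mono Icc_subset_Ici_self) hw0 hwξ
  have hvm : 0 < v m := pos_of_hasDerivAt_pos hm0 (hv.mono Icc_subset_Ici_self) hv0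
    (fun x hx => hvw x hx.1) (fun x hx => hpos x ⟨hx.1.le, hx.2⟩)
  obtain ⟨D, hD, hwD⟩ := hcross m hm0 hvm hwm
  exact hD.not_ge (hwD.nonpos_of_forall_Ico_le hm0 fun x hx => hwm ▸ (hpos x hx).le)

namespace SolvesKPZProfile

variable {q lam : ℝ} {f : ℝ → ℝ}

theorem hasDerivAt (hsol : SolvesKPZProfile q lam (Ici 0) f) {ξ : ℝ} (hξ : 0 < ξ) :
    HasDerivAt f (derivWithin f (Ici 0) ξ) ξ :=
  (hsol.1.differentiableOn (by norm_num) ξ hξ.le).hasDerivWithinAt.hasDerivAt (Ici_mem_nhds hξ)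

theorem contDiffOn_derivWithin (hsol : SolvesKPZProfile q lam (Ici 0) f) :
    ContDiffOn ℝ 1 (derivWithin f (Ici 0)) (Ici 0) :=
  hsol.1.derivWithin (uniqueDiffOn_Ici 0) (by norm_num)

theorem hasDerivAt_derivWithin (hsol : SolvesKPZProfile q lam (Ici 0) f) {ξ : ℝ} (hξ : 0 < ξ) :
    HasDerivAt (derivWithin f (Ici 0)) (derivWithin (derivWithin f (Ici 0)) (Ici 0) ξ) ξ :=
  (hsol.contDiffOn_derivWithin.differentiableOn one_ne_zero ξ hξ.le).hasDerivWithinAt.hasDerivAt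
    (Ici_mem_nhds hξ)

theorem hasDerivAt_derivWithin_derivWithin (hsol : SolvesKPZProfile q lam (Ici 0) f) (hq : q ≠ 1)
    {ξ : ℝ} (hξ : 0 < ξ) (hv : 0 < derivWithin f (Ici 0) ξ) :
    HasDerivAt (derivWithin (derivWithin f (Ici 0)) (Ici 0))
      ((ξ / 2 - lam * q * derivWithin f (Ici 0) ξ ^ (q - 1))
        * derivWithin (derivWithin f (Ici 0)) (Ici 0) ξ
        + derivWithin f (Ici 0) ξ / (2 * (q - 1))) ξ := by
  set v := derivWithin f (Ici 0)
  set w := derivWithin v (Ici 0)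
  set c := (q - 2) / (2 * (q - 1))
  have hode : w =ᶠ[𝓝 ξ] fun η => -(lam * v η ^ q) + 1 / 2 * η * v η - c * f η := by
    filter_upwards [Ioi_mem_nhds hξ,
      (hsol.hasDerivAt_derivWithin hξ).continuousAt.eventually (lt_mem_nhds hv)] with η hη hvη
    have := hsol.2 η (mem_Ici.2 (le_of_lt hη))
    rw [abs_of_pos hvη] at this
    linarith
  refine ((((((hsol.hasDerivAt_derivWithin hξ).rpow_const (Or.inl hv.ne')).const_mul lam).neg.add
    (((hasDerivAt_id ξ).const_mul (1 / 2)).mul (hsol.hasDerivAt_derivWithin hξ))).sub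
    ((hsol.hasDerivAt hξ).const_mul c)).congr_of_eventuallyEq hode).congr_deriv ?_
  have : q - 1 ≠ 0 := sub_ne_zero.2 hq
  simp only [c, id]
  field_simp
  ring

theorem derivWithin_derivWithin_pos (hsol : SolvesKPZProfile q lam (Ici 0) f) (hq : 2 < q)
    (hf0 : f 0 = -1) (hf'0 : derivWithin f (Ici 0) 0 = 0) {ξ : ℝ} (hξ : 0 ≤ ξ) :
    0 < derivWithin (derivWithin f (Ici 0)) (Ici 0) ξ := by
  refine forall_pos_of_crossing_upward hsol.contDiffOn_derivWithin.continuousOn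
    (hsol.contDiffOn_derivWithin.continuousOn_derivWithin (uniqueDiffOn_Ici 0) le_rfl) hf'0 ?_
    (fun ξ hξ => hsol.hasDerivAt_derivWithin hξ) (fun ξ hξ hv hw => ?_) ξ hξ
  · have := hsol.2 0 self_mem_Ici
    rw [hf'0, hf0, abs_zero, zero_rpow (by linarith)] at this
    have : 0 < (q - 2) / (2 * (q - 1)) := div_pos (by linarith) (by linarith)
    linarith
  · refine ⟨_, ?_, hsol.hasDerivAt_derivWithin_derivWithin (by linarith) hξ hv⟩
    rw [hw, mul_zero, zero_add]
    exact div_pos hv (by linarith)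

theorem derivWithin_pos (hsol : SolvesKPZProfile q lam (Ici 0) f) (hq : 2 < q)
    (hf0 : f 0 = -1) (hf'0 : derivWithin f (Ici 0) 0 = 0) {ξ : ℝ} (hξ : 0 < ξ) :
    0 < derivWithin f (Ici 0) ξ :=
  pos_of_hasDerivAt_pos hξ (hsol.contDiffOn_derivWithin.continuousOn.mono Icc_subset_Ici_self)
    hf'0 (fun _ hx => hsol.hasDerivAt_derivWithin hx.1)
    (fun _ hx => hsol.derivWithin_derivWithin_pos hq hf0 hf'0 hx.1.le)

theorem kpzReducedSystem (hsol : SolvesKPZProfile q lam (Ici 0) f) (hq : 2 < q) (hlam : 0 < lam)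
    (hf0 : f 0 = -1) (hf'0 : derivWithin f (Ici 0) 0 = 0) :
    KPZReducedSystem (q - 1) (fun ξ => lam * q * derivWithin f (Ici 0) ξ ^ (q - 1))
      (fun ξ => derivWithin (derivWithin f (Ici 0)) (Ici 0) ξ / derivWithin f (Ici 0) ξ) := by
  have hv := fun ξ (hξ : 0 < ξ) => hsol.derivWithin_pos hq hf0 hf'0 hξ
  have hw := fun ξ (hξ : 0 < ξ) => hsol.derivWithin_derivWithin_pos hq hf0 hf'0 hξ.le
  refine ⟨by linarith, fun ξ hξ => by have := hv ξ hξ; positivity,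
    fun ξ hξ => div_pos (hw ξ hξ) (hv ξ hξ), fun ξ hξ => ?_, fun ξ hξ => ?_⟩
  · refine (((hsol.hasDerivAt_derivWithin hξ).rpow_const (Or.inl (hv ξ hξ).ne')).const_mul
      (lam * q)).congr_deriv ?_
    rw [rpow_sub_one (hv ξ hξ).ne']
    field_simp
  · refine ((hsol.hasDerivAt_derivWithin_derivWithin (by linarith) hξ (hv ξ hξ)).div
      (hsol.hasDerivAt_derivWithin hξ) (hv ξ hξ).ne').congr_deriv ?_
    have : q - 1 ≠ 0 := by linarith
    have := (hv ξ hξ).ne'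
    field_simp

end SolvesKPZProfile

theorem kpzG_eq_rpow {q : ℝ} {f : ℝ → ℝ} (hq : q ≠ 1) {t : ℝ}
    (hv : 0 ≤ derivWithin f (Ici 0) (exp t)) :
    kpzG q f t = (derivWithin f (Ici 0) (exp t) ^ (q - 1) / exp t) ^ (1 / (q - 1)) := by
  rw [div_rpow (rpow_nonneg hv _) (exp_pos t).le, ← rpow_mul hv,
    mul_one_div_cancel (sub_ne_zero.2 hq), rpow_one, ← exp_mul, div_eq_mul_inv, ← exp_neg, mul_comm]
  simp only [kpzG]
  ring_nf

theorem kpz_g_limit (q lam : ℝ) (hq : 2 < q) (hlam : 0 < lam)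
    (f : ℝ → ℝ)
    (hsol : SolvesKPZProfile q lam (Set.Ici 0) f)
    (hf0 : f 0 = -1)
    (hf'0 : derivWithin f (Set.Ici 0) 0 = 0) :
    Tendsto (kpzG q f) atTop (𝓝 ((1 / (lam * q)) ^ (1 / (q - 1)))) := by
  have hlamq : 0 < lam * q := mul_pos hlam (by linarith)
  have hlim := (((hsol.kpzReducedSystem hq hlam hf0 hf'0).tendsto_X_div.comp
    tendsto_exp_atTop).div_const (lam * q)).rpow_const (p := 1 / (q - 1))
    (Or.inl (one_div_pos.2 hlamq).ne')
  refine hlim.congr fun t => ?_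
  rw [kpzG_eq_rpow (by linarith) (hsol.derivWithin_pos hq hf0 hf'0 (exp_pos t)).le]
  simp only [Function.comp]
  field_simp
end

section
/- Let q > 2, λ > 0, and f₀ > 0. Let f be a three times differentiable solution of the ODE f''(ξ) + λ|f'(ξ)|^q − (1/2)ξ f'(ξ) + ((q−2)/(2(q−1))) f(ξ) = 0 on an interval [0, ξ̄), satisfying f(0) = f₀, f'(0) = 0, and such that f'(ξ) < 0 and f''(ξ) < 0 on (0, ξ̄). Then f''(ξ) < −λ |f'(ξ)|^q for every ξ ∈ (0, ξ̄). -/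
open Set Filter Topology Real

/-- The interval `[0, ξb)` of real numbers, where the right endpoint `ξb` is an
extended real number (so `ξb = ⊤` gives `[0, ∞)`). -/
def KPZDomain (ξb : EReal) : Set ℝ := {ξ : ℝ | 0 ≤ ξ ∧ (ξ : EReal) < ξb}

/-!
Rewrite the profile equation as `f'' + λ|f'|^q = g` with `g ξ = ξ f'(ξ)/2 - c f(ξ)` and
`c = (q-2)/(2(q-1)) ∈ (0, 1/2)`. Then `g' = (1/2 - c) f' + ξ f''/2 < 0`, so
`g ξ < g 0 = -c f₀ < 0` for `ξ > 0`.
-/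

lemma Icc_subset_kpzDomain {ξ : ℝ} {ξb : EReal} (hξ : (ξ : EReal) < ξb) :
    Icc 0 ξ ⊆ KPZDomain ξb :=
  fun _ hy => ⟨hy.1, (EReal.coe_le_coe_iff.mpr hy.2).trans_lt hξ⟩

lemma kpzDomain_mem_nhds {x : ℝ} {ξb : EReal} (hx0 : 0 < x) (hx : (x : EReal) < ξb) :
    KPZDomain ξb ∈ 𝓝 x := by
  have hopen : IsOpen (Ioi 0 ∩ {y : ℝ | (y : EReal) < ξb}) :=
    isOpen_Ioi.inter (isOpen_lt continuous_coe_real_ereal continuous_const)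
  exact mem_of_superset (hopen.mem_nhds ⟨hx0, hx⟩) fun y hy => ⟨hy.1.le, hy.2⟩

lemma DifferentiableOn.hasDerivAt_derivWithin_kpzDomain {f : ℝ → ℝ} {ξb : EReal}
    (hf : DifferentiableOn ℝ f (KPZDomain ξb)) {x : ℝ} (hx0 : 0 < x) (hx : (x : EReal) < ξb) :
    HasDerivAt f (derivWithin f (KPZDomain ξb) x) x :=
  (hf x ⟨hx0.le, hx⟩).hasDerivWithinAt.hasDerivAt (kpzDomain_mem_nhds hx0 hx)

lemma kpz_coeff_pos {q : ℝ} (hq : 2 < q) : 0 < (q - 2) / (2 * (q - 1)) :=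
  div_pos (by linarith) (by linarith)

lemma kpz_coeff_lt_half {q : ℝ} (hq : 1 < q) : (q - 2) / (2 * (q - 1)) < 1 / 2 := by
  rw [div_lt_div_iff₀ (by linarith) two_pos]
  linarith

lemma strictAntiOn_mul_deriv_div_two_sub {f f' f'' : ℝ → ℝ} {a b c : ℝ} (ha : 0 ≤ a)
    (hc : c < 1 / 2) (hf : ContinuousOn f (Icc a b)) (hf' : ContinuousOn f' (Icc a b))
    (hff' : ∀ x ∈ Ioo a b, HasDerivAt f (f' x) x)
    (hf'f'' : ∀ x ∈ Ioo a b, HasDerivAt f' (f'' x) x)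
    (hf'_neg : ∀ x ∈ Ioo a b, f' x < 0) (hf''_nonpos : ∀ x ∈ Ioo a b, f'' x ≤ 0) :
    StrictAntiOn (fun x => x * f' x / 2 - c * f x) (Icc a b) := by
  refine strictAntiOn_of_hasDerivWithinAt_neg (convex_Icc a b)
    (((continuousOn_id.mul hf').div_const 2).sub (hf.const_mul c))
    (f' := fun x => (1 / 2 - c) * f' x + x * f'' x / 2) ?_ ?_
  · intro x hx
    rw [interior_Icc] at hx
    exact ((((hasDerivAt_id' x).mul (hf'f'' x hx)).div_const 2).sub
      ((hff' x hx).const_mul c)).congr_deriv (by ring) |>.hasDerivWithinAt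
  · intro x hx
    rw [interior_Icc] at hx
    have hfirst := mul_neg_of_pos_of_neg (sub_pos.mpr hc) (hf'_neg x hx)
    have hsecond := mul_nonpos_of_nonneg_of_nonpos (ha.trans hx.1.le) (hf''_nonpos x hx)
    linarith

theorem kpz_profile_pos_data_diff_ineq_general (q lam f₀ : ℝ) (hq : 2 < q)
    (hf₀ : 0 < f₀)
    (ξb : EReal)
    (f : ℝ → ℝ)
    -- `f` is three times differentiable on `[0, ξb)`:
    (hdiff : DifferentiableOn ℝ f (KPZDomain ξb))
    (hdiff' : DifferentiableOn ℝ (derivWithin f (KPZDomain ξb)) (KPZDomain ξb))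
    -- `f` solves the self-similar profile ODE on `[0, ξb)`:
    (hode : ∀ ξ ∈ KPZDomain ξb,
      derivWithin (derivWithin f (KPZDomain ξb)) (KPZDomain ξb) ξ
        + lam * |derivWithin f (KPZDomain ξb) ξ| ^ q
        - (1 / 2) * ξ * derivWithin f (KPZDomain ξb) ξ
        + ((q - 2) / (2 * (q - 1))) * f ξ = 0)
    (hf0 : f 0 = f₀)
    (hf'0 : derivWithin f (KPZDomain ξb) 0 = 0)
    (hf'neg : ∀ ξ : ℝ, 0 < ξ → (ξ : EReal) < ξb → derivWithin f (KPZDomain ξb) ξ < 0)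
    (hf''neg : ∀ ξ : ℝ, 0 < ξ → (ξ : EReal) < ξb →
      derivWithin (derivWithin f (KPZDomain ξb)) (KPZDomain ξb) ξ < 0) :
    ∀ ξ : ℝ, 0 < ξ → (ξ : EReal) < ξb →
      derivWithin (derivWithin f (KPZDomain ξb)) (KPZDomain ξb) ξ
        < -lam * |derivWithin f (KPZDomain ξb) ξ| ^ q := by
  intro ξ hξ0 hξ
  have hsub : Icc 0 ξ ⊆ KPZDomain ξb := Icc_subset_kpzDomain hξ
  have hlt (x : ℝ) (hx : x ∈ Ioo 0 ξ) : (x : EReal) < ξb :=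
    (EReal.coe_lt_coe_iff.mpr hx.2).trans hξ
  have hanti := strictAntiOn_mul_deriv_div_two_sub le_rfl (kpz_coeff_lt_half (q := q) (by linarith))
    (hdiff.continuousOn.mono hsub) (hdiff'.continuousOn.mono hsub)
    (fun x hx => hdiff.hasDerivAt_derivWithin_kpzDomain hx.1 (hlt x hx))
    (fun x hx => hdiff'.hasDerivAt_derivWithin_kpzDomain hx.1 (hlt x hx))
    (fun x hx => hf'neg x hx.1 (hlt x hx)) (fun x hx => (hf''neg x hx.1 (hlt x hx)).le)
  have hdecr := hanti (left_mem_Icc.mpr hξ0.le) (right_mem_Icc.mpr hξ0.le) hξ0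
  simp only [hf'0, hf0, zero_mul, zero_div, zero_sub] at hdecr
  have hg0_neg := mul_pos (kpz_coeff_pos hq) hf₀
  linarith [hode ξ (hsub (right_mem_Icc.mpr hξ0.le))]

theorem kpz_profile_pos_data_diff_ineq (q lam f₀ : ℝ) (hq : 2 < q) (hlam : 0 < lam)
    (hf₀ : 0 < f₀)
    (ξb : EReal) (hξb : 0 < ξb)
    (f : ℝ → ℝ)
    -- `f` is three times differentiable on `[0, ξb)`:
    (hdiff : DifferentiableOn ℝ f (KPZDomain ξb))
    (hdiff' : DifferentiableOn ℝ (derivWithin f (KPZDomain ξb)) (KPZDomain ξb))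
    (hdiff'' : DifferentiableOn ℝ
      (derivWithin (derivWithin f (KPZDomain ξb)) (KPZDomain ξb)) (KPZDomain ξb))
    -- `f` solves the self-similar profile ODE on `[0, ξb)`:
    (hode : ∀ ξ ∈ KPZDomain ξb,
      derivWithin (derivWithin f (KPZDomain ξb)) (KPZDomain ξb) ξ
        + lam * |derivWithin f (KPZDomain ξb) ξ| ^ q
        - (1 / 2) * ξ * derivWithin f (KPZDomain ξb) ξ
        + ((q - 2) / (2 * (q - 1))) * f ξ = 0)
    (hf0 : f 0 = f₀)
    (hf'0 : derivWithin f (KPZDomain ξb) 0 = 0)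
    (hf'neg : ∀ ξ : ℝ, 0 < ξ → (ξ : EReal) < ξb → derivWithin f (KPZDomain ξb) ξ < 0)
    (hf''neg : ∀ ξ : ℝ, 0 < ξ → (ξ : EReal) < ξb →
      derivWithin (derivWithin f (KPZDomain ξb)) (KPZDomain ξb) ξ < 0) :
    ∀ ξ : ℝ, 0 < ξ → (ξ : EReal) < ξb →
      derivWithin (derivWithin f (KPZDomain ξb)) (KPZDomain ξb) ξ
        < -lam * |derivWithin f (KPZDomain ξb) ξ| ^ q :=
  kpz_profile_pos_data_diff_ineq_general q lam f₀ hq hf₀ ξb f hdiff hdiff' hode hf0 hf'0 hf'neg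
    hf''neg
end
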